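/- arXiv:2402.12585 — 3 statements merged into one kernel-verified Lean document; each statement's English description precedes it below -/
import Mathlib

section
/- Let G be a group and n ≥ 1. Suppose elements a_1,…,a_{n+2}, b_0,…,b_{n-2}, c_1,…,c_{n+1} of G satisfy: b_{n-2} = a_n a_{n+2} a_n^{-1}; b_i = a_{i+2} b_{i+1} a_{i+2}^{-1} for 0 ≤ i ≤ n-3; a_{n+1} = a_1 b_0 a_1^{-1}; a_i = a_{n+1} a_{i+1} a_{n+1}^{-1} for 1 ≤ i ≤ n-1; c_1 = a_{n+1} a_1 a_{n+1}^{-1}; a_{n+2} = a_{n+1} c_{n+1} a_{n+1}^{-1}; and c_i = a_{i-1}^{-1} c_{i-1} a_{i-1} for 2 ≤ i ≤ n+1. If moreover a_1 a_{n+1} = a_{n+1} a_1, then a_{n+1} = a_1. -/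
/-- Group-theoretic core of Case 1 (m ≥ 2 even): the Wirtinger relations of the
braid coloration for the twist knot `K_m` (with `n = m/2`), together with
commutativity of `a 1` and `a (n+1)`, force `a (n+1) = a 1`. -/
theorem case1_wirtinger_forces_equal
    {G : Type*} [Group G] (n : ℕ) (hn : 1 ≤ n)
    (a b c : ℕ → G)
    (h1 : b (n - 2) = a n * a (n + 2) * (a n)⁻¹)
    (h2 : ∀ i, i + 3 ≤ n → b i = a (i + 2) * b (i + 1) * (a (i + 2))⁻¹)
    (h3 : a (n + 1) = a 1 * b 0 * (a 1)⁻¹)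
    (h4 : ∀ i, 1 ≤ i → i + 1 ≤ n → a i = a (n + 1) * a (i + 1) * (a (n + 1))⁻¹)
    (h5 : c 1 = a (n + 1) * a 1 * (a (n + 1))⁻¹)
    (h6 : a (n + 2) = a (n + 1) * c (n + 1) * (a (n + 1))⁻¹)
    (h7 : ∀ i, 2 ≤ i → i ≤ n + 1 → c i = (a (i - 1))⁻¹ * c (i - 1) * a (i - 1))
    (hcomm : a 1 * a (n + 1) = a (n + 1) * a 1) :
    a (n + 1) = a 1 := by
  have conjA : a (n+1) * a 1 * (a (n+1))⁻¹ = a 1 := by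
    rw [← hcomm, mul_inv_cancel_right]
  have conjAinv : (a (n+1))⁻¹ * a 1 * a (n+1) = a 1 := by
    rw [mul_assoc, hcomm, ← mul_assoc, inv_mul_cancel, one_mul]
  have ha : ∀ i, 1 ≤ i → i ≤ n → a i = a 1 := by
    intro i
    induction i with
    | zero => omega
    | succ i ih =>
      intro _ hle
      rcases Nat.eq_zero_or_pos i with hi | hi
      · subst hi; rfl
      · have h4i := h4 i hi hle
        have : a (i + 1) = (a (n+1))⁻¹ * a i * a (n+1) := by
          rw [h4i]; group
        rw [this, ih hi (by omega), conjAinv]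
  have hcval : ∀ i, 1 ≤ i → i ≤ n + 1 → c i = a 1 := by
    intro i
    induction i with
    | zero => omega
    | succ i ih =>
      intro _ hle
      rcases Nat.eq_zero_or_pos i with hi | hi
      · subst hi; rw [h5, conjA]
      · have h7i := h7 (i + 1) (by omega) hle
        simp only [Nat.add_sub_cancel] at h7i
        rw [h7i, ih hi (by omega), ha i hi (by omega)]
        group
  have han2 : a (n + 2) = a 1 := by
    rw [h6, hcval (n+1) (by omega) le_rfl, conjA]
  have hbn2 : b (n - 2) = a 1 := by
    rw [h1, han2, ha n hn le_rfl, mul_inv_cancel_right]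
  have hb : ∀ k, k ≤ n - 2 → b (n - 2 - k) = a 1 := by
    intro k
    induction k with
    | zero => intro _; simpa using hbn2
    | succ k ih =>
      intro hk
      have h2i := h2 (n - 2 - (k + 1)) (by omega)
      have e1 : n - 2 - (k + 1) + 1 = n - 2 - k := by omega
      have e2 : n - 2 - (k + 1) + 2 = n - 1 - k := by omega
      rw [e1, e2] at h2i
      rw [h2i, ih (by omega), ha (n - 1 - k) (by omega) (by omega),
        mul_inv_cancel_right]
  have hb0 : b 0 = a 1 := by
    have := hb (n - 2) le_rfl
    simpa using this
  rw [h3, hb0, mul_inv_cancel_right]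
end

section
/- Let G be a group and n ≥ 1. Suppose elements a_1,…,a_{n+2}, b_1,…,b_{n-1}, c_1,…,c_n of G satisfy: c_1 = a_{n+1} a_{n+2} a_{n+1}^{-1}; b_i = c_1^{-1} a_{i+1} c_1 for 1 ≤ i ≤ n-1; a_{n+2} = c_1^{-1} a_1 c_1; a_i = a_{n+2} b_i a_{n+2}^{-1} for 1 ≤ i ≤ n-1; a_n = a_{n+2} a_{n+1} a_{n+2}^{-1}; c_i = a_{i-1}^{-1} c_{i-1} a_{i-1} for 2 ≤ i ≤ n; and a_{n+1} = a_n^{-1} c_n a_n. If a_{n+1} a_{n+2} = a_{n+2} a_{n+1}, then a_{n+1} = a_{n+2}. -/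
/-- Group-theoretic core of Case 2 (m ≤ -3 odd): the Wirtinger relations of the
braid coloration for the twist knot `K_m` (with `n = (m-1)/2`), together with
commutativity of `a (n+1)` and `a (n+2)`, force `a (n+1) = a (n+2)`. -/
theorem case2_wirtinger_forces_equal
    {G : Type*} [Group G] (n : ℕ) (hn : 1 ≤ n)
    (a b c : ℕ → G)
    (h1 : c 1 = a (n + 1) * a (n + 2) * (a (n + 1))⁻¹)
    (h2 : ∀ i, 1 ≤ i → i + 1 ≤ n → b i = (c 1)⁻¹ * a (i + 1) * c 1)
    (h3 : a (n + 2) = (c 1)⁻¹ * a 1 * c 1)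
    (h4 : ∀ i, 1 ≤ i → i + 1 ≤ n → a i = a (n + 2) * b i * (a (n + 2))⁻¹)
    (h5 : a n = a (n + 2) * a (n + 1) * (a (n + 2))⁻¹)
    (h6 : ∀ i, 2 ≤ i → i ≤ n → c i = (a (i - 1))⁻¹ * c (i - 1) * a (i - 1))
    (h7 : a (n + 1) = (a n)⁻¹ * c n * a n)
    (hcomm : a (n + 1) * a (n + 2) = a (n + 2) * a (n + 1)) :
    a (n + 1) = a (n + 2) := by
  -- c 1 = a (n+2)
  have hc1 : c 1 = a (n + 2) := by
    rw [h1, hcomm]; group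
  -- a 1 = a (n+2)
  have ha1 : a 1 = a (n + 2) := by
    have h := h3
    rw [hc1] at h
    have key : a (n + 2) * a (n + 2) = a 1 * a (n + 2) := by
      nth_rewrite 2 [h]; group
    exact (mul_right_cancel key).symm
  -- chain: a i = a (i+1)
  have hchain : ∀ i, 1 ≤ i → i + 1 ≤ n → a i = a (i + 1) := by
    intro i hi hin
    rw [h4 i hi hin, h2 i hi hin, hc1]
    group
  -- a k = a 1 for all 1 ≤ k ≤ n
  have hall : ∀ k, 1 ≤ k → k ≤ n → a k = a 1 := by
    intro k hk
    induction k, hk using Nat.le_induction with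
    | base => intro _; rfl
    | succ k hk ih =>
      intro hkn
      rw [← hchain k hk hkn]
      exact ih (le_trans (Nat.le_succ k) hkn)
  have han : a n = a (n + 2) := (hall n hn le_rfl).trans ha1
  have hb := h5
  rw [han] at hb
  have key : a (n + 2) * a (n + 2) = a (n + 2) * a (n + 1) := by
    nth_rewrite 1 [hb]; group
  exact (mul_left_cancel key).symm
end

section
/- Let G be a group and n ≥ 1. Suppose elements a_1,…,a_{n+2}, b_0,…,b_{n-1}, c_0,…,c_n of G satisfy: b_{n-1} = a_{n+1} a_{n+2} a_{n+1}^{-1}; b_i = a_{i+2} b_{i+1} a_{i+2}^{-1} for 0 ≤ i ≤ n-2; c_n = a_1 b_0 a_1^{-1}; c_0 = c_n a_1 c_n^{-1}; a_i = c_n a_{i+1} c_n^{-1} for 1 ≤ i ≤ n; c_i = a_i^{-1} c_{i-1} a_i for 1 ≤ i ≤ n-1; and a_{n+1} = a_{n+2} c_n a_{n+2}^{-1}. If a_{n+1} a_{n+2} = a_{n+2} a_{n+1}, then a_{n+1} = a_{n+2}. -/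
/-- Group-theoretic core of Case 3 (m ≥ 2 odd): the Wirtinger relations of the
braid coloration for the twist knot `K_m` (with `n = (m-1)/2`), together with
commutativity of `a (n+1)` and `a (n+2)`, force `a (n+1) = a (n+2)`. -/
theorem case3_wirtinger_forces_equal
    {G : Type*} [Group G] (n : ℕ) (hn : 1 ≤ n)
    (a b c : ℕ → G)
    (h1 : b (n - 1) = a (n + 1) * a (n + 2) * (a (n + 1))⁻¹)
    (h2 : ∀ i, i + 2 ≤ n → b i = a (i + 2) * b (i + 1) * (a (i + 2))⁻¹)
    (h3 : c n = a 1 * b 0 * (a 1)⁻¹)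
    (h4 : c 0 = c n * a 1 * (c n)⁻¹)
    (h5 : ∀ i, 1 ≤ i → i ≤ n → a i = c n * a (i + 1) * (c n)⁻¹)
    (h6 : ∀ i, 1 ≤ i → i + 1 ≤ n → c i = (a i)⁻¹ * c (i - 1) * a i)
    (h7 : a (n + 1) = a (n + 2) * c n * (a (n + 2))⁻¹)
    (hcomm : a (n + 1) * a (n + 2) = a (n + 2) * a (n + 1)) :
    a (n + 1) = a (n + 2) := by
  -- conjugating a(n+2) by a(n+1) does nothing
  have hconj : a (n + 1) * a (n + 2) * (a (n + 1))⁻¹ = a (n + 2) := by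
    rw [hcomm]; group
  -- c n = a (n+1)
  have hc : c n = a (n + 1) := by
    have : a (n + 2) * c n * (a (n + 2))⁻¹ = a (n + 1) := h7.symm
    have h : c n = (a (n + 2))⁻¹ * a (n + 1) * a (n + 2) := by
      rw [← this]; group
    rw [h, mul_assoc, hcomm]; group
  -- all a i with 1 ≤ i ≤ n+1 equal a (n+1)
  have hA : ∀ k, k ≤ n → a (n + 1 - k) = a (n + 1) := by
    intro k
    induction k with
    | zero => intro _; rfl
    | succ k ih =>
      intro hk
      have hk' : k ≤ n := by omega
      have e1 : n + 1 - (k + 1) = n - k := by omega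
      have e2 : (n - k) + 1 = n + 1 - k := by omega
      have := h5 (n - k) (by omega) (by omega)
      rw [e1, this, e2, ih hk', hc]
      group
  -- all b i with i ≤ n - 1 equal a (n+2)
  have hB : ∀ k, k ≤ n - 1 → b (n - 1 - k) = a (n + 2) := by
    intro k
    induction k with
    | zero => intro _; rw [Nat.sub_zero, h1, hconj]
    | succ k ih =>
      intro hk
      have e1 : n - 1 - (k + 1) = n - 2 - k := by omega
      have e2 : (n - 2 - k) + 2 = n - k := by omega
      have e3 : (n - 2 - k) + 1 = n - 1 - k := by omega
      have := h2 (n - 2 - k) (by omega)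
      have ha : a ((n - 2 - k) + 2) = a (n + 1) := by
        rw [e2]
        have := hA (k + 1) (by omega)
        rwa [show n + 1 - (k + 1) = n - k by omega] at this
      rw [e1, this, ha, e3, ih (by omega), hconj]
  have hb0 : b 0 = a (n + 2) := by
    have := hB (n - 1) (le_refl _)
    rwa [Nat.sub_self] at this
  have ha1 : a 1 = a (n + 1) := by
    have := hA n (le_refl _)
    rwa [show n + 1 - n = 1 by omega] at this
  rw [← hc, h3, hb0, ha1, hconj]
end
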